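/- arXiv:math/0308025 — 5 statements merged into one kernel-verified Lean document; each statement's English description precedes it below -/
import Mathlib

section
/- Let each Ω_k be a nonempty countable set with the discrete σ-algebra and μ_k a probability measure on Ω_k, and let μ = ⊗_{k=1}^∞ μ_k be the infinite product probability measure on Ω = Π_k Ω_k. Then μ is purely discrete (i.e., there exists a countable subset of Ω of full μ-measure) if and only if the infinite product Π_{k=1}^∞ (max_{ω_k ∈ Ω_k} μ_k({ω_k})) is strictly positive. -/
/-!
An atom has mass `P {x} = ∏ₖ μₖ {xₖ} ≤ ∏ₖ maxₖ`, so when this product vanishes `P` has no atoms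
and every countable set is null. Conversely, pick heaviest atoms `aₖ`, so that
`c = ∏ₖ μₖ {aₖ} > 0`. The sequences eventually equal to `a` form a countable set containing each
tail cylinder `{ω | ωₖ = aₖ for k ≥ N}`, whose mass `∏_{k ≥ N} μₖ {aₖ}` is at least
`c / ∏_{k < N} μₖ {aₖ}`; this bound tends to `1`.
-/

open MeasureTheory

/-- `P` is the infinite product of the probability measures `μ k`: every
finite-dimensional cylinder set gets the product of the coordinate measures.
(Taking the empty finite set shows that `P` is a probability measure, and this
property determines `P` uniquely on the product σ-algebra.) -/
def IsProductMeasure {Ω : ℕ → Type*} [∀ k, MeasurableSpace (Ω k)]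
    (μ : (k : ℕ) → Measure (Ω k)) (P : Measure ((k : ℕ) → Ω k)) : Prop :=
  ∀ (s : Finset ℕ) (E : (k : ℕ) → Set (Ω k)), (∀ k ∈ s, MeasurableSet (E k)) →
    P {ω | ∀ k ∈ s, ω k ∈ E k} = ∏ k ∈ s, μ k (E k)

open Filter Set
open scoped ENNReal

theorem ENNReal.exists_forall_le_of_tsum_ne_top {α : Type*} [Nonempty α] {f : α → ℝ≥0∞}
    (hf : ∑' a, f a ≠ ∞) : ∃ a, ∀ b, f b ≤ f a := by
  obtain h | ⟨a, ha⟩ := forall_or_exists_not fun a => f a = 0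
  · exact ⟨Classical.arbitrary α, fun b => by simp [h]⟩
  obtain ⟨b, hab, hb⟩ := exists_max_image {b | f a ≤ f b} f
    (finite_const_le_of_tsum_ne_top hf ha) ⟨a, show f a ≤ f a from le_rfl⟩
  refine ⟨b, fun c => ?_⟩
  by_cases hc : f a ≤ f c
  · exact hb c hc
  · exact (not_le.1 hc).le.trans hab

theorem ENNReal.iInf_prod_range_le_mul_iInf_prod_Ico {f : ℕ → ℝ≥0∞} (hf : ∀ k, f k ≠ ∞)
    (N : ℕ) :
    ⨅ n, ∏ k ∈ Finset.range n, f k ≤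
      (∏ k ∈ Finset.range N, f k) * ⨅ n, ∏ k ∈ Finset.Ico N n, f k := by
  obtain h0 | h0 := eq_or_ne (∏ k ∈ Finset.range N, f k) 0
  · exact (iInf_le _ N).trans (by simp [h0])
  rw [mul_iInf_of_ne h0 (prod_ne_top fun k _ => hf k)]
  refine le_iInf fun n => ?_
  obtain hn | hn := le_total N n
  · rw [Finset.prod_range_mul_prod_Ico f hn]
    exact iInf_le _ n
  · rw [Finset.Ico_eq_empty_of_le hn, Finset.prod_empty, mul_one]
    exact iInf_le _ N

theorem MeasureTheory.exists_forall_measure_singleton_le {α : Type*} [MeasurableSpace α]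
    [MeasurableSingletonClass α] [Nonempty α] (μ : Measure α) [IsFiniteMeasure μ] :
    ∃ a, ∀ b, μ {b} ≤ μ {a} :=
  ENNReal.exists_forall_le_of_tsum_ne_top <| ne_top_of_le_ne_top (measure_ne_top μ univ) <|
    (tsum_meas_le_meas_iUnion_of_disjoint μ measurableSet_singleton
      fun _ _ h => disjoint_singleton.2 h).trans (measure_mono (subset_univ _))

theorem Set.countable_setOf_eventually_eq {Ω : ℕ → Type*} [∀ k, Countable (Ω k)]
    (a : (k : ℕ) → Ω k) : {ω : (k : ℕ) → Ω k | ∀ᶠ k in atTop, ω k = a k}.Countable := by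
  have hU : {ω : (k : ℕ) → Ω k | ∀ᶠ k in atTop, ω k = a k} = ⋃ N, (Ici N).pi fun k => {a k} := by
    ext ω
    simp [eventually_atTop, Set.mem_pi]
  rw [hU]
  refine countable_iUnion fun N => ?_
  refine (mapsTo_univ (fun ω (k : Fin N) => ω k) _).countable_of_injOn ?_ countable_univ
  intro ω hω ω' hω' h
  funext k
  obtain hk | hk := lt_or_ge k N
  · exact congr_fun h ⟨k, hk⟩
  · exact (hω k hk).trans (hω' k hk).symm

namespace IsProductMeasure

variable {Ω : ℕ → Type*} [∀ k, MeasurableSpace (Ω k)] {μ : (k : ℕ) → Measure (Ω k)}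
  {P : Measure ((k : ℕ) → Ω k)}

theorem isProbabilityMeasure (hP : IsProductMeasure μ P) : IsProbabilityMeasure P :=
  ⟨by simpa using hP ∅ (fun _ => univ) (by simp)⟩

theorem measure_pi_Ici (hP : IsProductMeasure μ P) (N : ℕ) {E : (k : ℕ) → Set (Ω k)}
    (hE : ∀ k, MeasurableSet (E k)) :
    P ((Ici N).pi E) = ⨅ n, ∏ k ∈ Finset.Ico N n, μ k (E k) := by
  have := hP.isProbabilityMeasure
  have hcyl : (Ici N).pi E = ⋂ n, (Finset.Ico N n : Set ℕ).pi E := by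
    ext ω
    simp only [Set.mem_pi, mem_Ici, mem_iInter, Finset.coe_Ico, mem_Ico, and_imp]
    exact ⟨fun h _ k hk _ => h k hk, fun h k hk => h (k + 1) k hk k.lt_succ_self⟩
  rw [hcyl, Antitone.measure_iInter]
  · exact iInf_congr fun n => hP _ E fun k _ => hE k
  · intro n n' h
    exact pi_mono' (fun _ _ => subset_rfl) (Finset.coe_subset.2 (Finset.Ico_subset_Ico_right h))
  · exact fun n => (MeasurableSet.pi (Finset.countable_toSet _) fun k _ => hE k).nullMeasurableSet
  · exact ⟨0, measure_ne_top P _⟩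

variable [∀ k, MeasurableSingletonClass (Ω k)]

theorem measure_singleton_eq (hP : IsProductMeasure μ P) (x : (k : ℕ) → Ω k) :
    P {x} = ⨅ n, ∏ k ∈ Finset.range n, μ k {x k} := by
  have := hP.measure_pi_Ici 0 fun k => measurableSet_singleton (x k)
  rw [← bot_eq_zero, Set.Ici_bot, univ_pi_singleton] at this
  simpa only [bot_eq_zero, ← Finset.range_eq_Ico] using this

theorem nullSingletonClass (hP : IsProductMeasure μ P)
    (h : ⨅ n, ∏ k ∈ Finset.range n, ⨆ ω : Ω k, μ k {ω} = 0) : NullSingletonClass P := by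
  refine ⟨fun x => ?_⟩
  rw [hP.measure_singleton_eq x, ← nonpos_iff_eq_zero, ← h]
  gcongr
  exact le_iSup (fun ω => μ _ {ω}) _

theorem measure_setOf_eventually_eq [∀ k, IsFiniteMeasure (μ k)] (hP : IsProductMeasure μ P)
    (a : (k : ℕ) → Ω k) (ha : 0 < ⨅ n, ∏ k ∈ Finset.range n, μ k {a k}) :
    P {ω | ∀ᶠ k in atTop, ω k = a k} = 1 := by
  have := hP.isProbabilityMeasure
  set c := ⨅ n, ∏ k ∈ Finset.range n, μ k {a k}
  set U := {ω : (k : ℕ) → Ω k | ∀ᶠ k in atTop, ω k = a k}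
  have hc_top : c ≠ ∞ := ne_top_of_le_ne_top ENNReal.one_ne_top (iInf_le_of_le 0 (by simp))
  have hcU : c ≤ c * P U := by
    rw [ENNReal.iInf_mul fun h => absurd h (measure_ne_top P U)]
    refine le_iInf fun N => ?_
    calc c ≤ (∏ k ∈ Finset.range N, μ k {a k}) * ⨅ n, ∏ k ∈ Finset.Ico N n, μ k {a k} :=
          ENNReal.iInf_prod_range_le_mul_iInf_prod_Ico (fun k => measure_ne_top _ _) N
      _ = (∏ k ∈ Finset.range N, μ k {a k}) * P ((Ici N).pi fun k => {a k}) := by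
          rw [hP.measure_pi_Ici N fun k => measurableSet_singleton _]
      _ ≤ (∏ k ∈ Finset.range N, μ k {a k}) * P U := by
          gcongr
          exact fun ω hω => eventually_atTop.2 ⟨N, hω⟩
  refine le_antisymm prob_le_one ?_
  rwa [← ENNReal.mul_le_mul_iff_right ha.ne' hc_top, mul_one]

end IsProductMeasure

/-- Since each factor lies in `[0,1]`, the infinite product is the infimum of its partial
products. -/
theorem productMeasure_discrete_iff
    {Ω : ℕ → Type*} [∀ k, MeasurableSpace (Ω k)] [∀ k, Countable (Ω k)]
    [∀ k, Nonempty (Ω k)]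
    (hdisc : ∀ k (s : Set (Ω k)), MeasurableSet s)
    (μ : (k : ℕ) → Measure (Ω k)) [∀ k, IsProbabilityMeasure (μ k)]
    (P : Measure ((k : ℕ) → Ω k)) (hP : IsProductMeasure μ P) :
    (∃ D : Set ((k : ℕ) → Ω k), D.Countable ∧ P D = 1) ↔
      0 < ⨅ n : ℕ, ∏ k ∈ Finset.range n, ⨆ ω : Ω k, μ k {ω} := by
  have (k : ℕ) : MeasurableSingletonClass (Ω k) := ⟨fun x => hdisc k {x}⟩
  constructor
  · rintro ⟨D, hD, hPD⟩
    refine pos_iff_ne_zero.2 fun h => ?_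
    have := hP.nullSingletonClass h
    simp [hD.measure_zero P] at hPD
  · intro hc
    choose a ha using fun k => exists_forall_measure_singleton_le (μ k)
    have hsup (k : ℕ) : ⨆ ω, μ k {ω} = μ k {a k} :=
      le_antisymm (iSup_le (ha k)) (le_iSup (fun ω => μ k {ω}) (a k))
    simp only [hsup] at hc
    exact ⟨_, countable_setOf_eventually_eq a, hP.measure_setOf_eventually_eq a hc⟩
end

section
/- Let (Ω_k, A_k) be measurable spaces carrying probability measures μ_k and ν_k with ν_k absolutely continuous with respect to μ_k for every k, and let μ = ⊗_k μ_k, ν = ⊗_k ν_k be the infinite product measures on Ω = Π_k Ω_k. Then the dichotomy holds: either ν is absolutely continuous with respect to μ, or ν and μ are mutually singular. -/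
/-!
Write `a_k = ∫ √(dν_k/dμ_k) dμ_k ≤ 1` for the Hellinger affinities and
`√X_n = ∏_{k<n} √(dν_k/dμ_k)`, so that `X_n` is the density of `ν` with respect to `μ` on sets
depending on the first `n` coordinates, and `∫ √X_n dμ = ∏_{k<n} a_k`.

If `∏ a_k = 0`, Markov's inequality makes `{√X_n ≥ ε}` small for `μ` while its complement is small
for `ν`, and Borel–Cantelli turns these sets into one separating the two measures.

If `∏ a_k > 0`, then `⟪√X_m, √X_n⟫ = ∏_{m ≤ k < n} a_k → 1`, so `√X_n` is Cauchy in `L²(μ)`;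
its limit `ζ` satisfies `ν = ζ² μ` on cylinders, hence everywhere.
-/

open MeasureTheory

open Filter Set ENNReal Topology ProbabilityTheory
open scoped InnerProductSpace

theorem MeasureTheory.Measure.mutuallySingular_of_forall_exists_le {α : Type*}
    [MeasurableSpace α] {μ ν : Measure α}
    (h : ∀ ε : ℝ≥0∞, 0 < ε → ∃ s, MeasurableSet s ∧ μ s ≤ ε ∧ ν sᶜ ≤ ε) : μ ⟂ₘ ν := by
  choose s hs hμs hνs using fun n : ℕ => h (2⁻¹ ^ n) (ENNReal.pow_pos (by norm_num) n)
  have hsum : ∑' n : ℕ, (2⁻¹ : ℝ≥0∞) ^ n ≠ ∞ := by simp [ENNReal.tsum_geometric]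
  refine ⟨limsup s atTop, MeasurableSet.measurableSet_limsup hs,
    measure_limsup_atTop_eq_zero (ne_top_of_le_ne_top hsum (ENNReal.tsum_le_tsum hμs)), ?_⟩
  rw [limsup_compl]
  exact measure_mono_null liminf_le_limsup
    (measure_limsup_atTop_eq_zero (ne_top_of_le_ne_top hsum (ENNReal.tsum_le_tsum hνs)))

theorem IsProductMeasure.eq_infinitePi {Ω : ℕ → Type*} [∀ k, MeasurableSpace (Ω k)]
    {μ : (k : ℕ) → Measure (Ω k)} [∀ k, IsProbabilityMeasure (μ k)]
    {P : Measure ((k : ℕ) → Ω k)} (hP : IsProductMeasure μ P) : P = Measure.infinitePi μ :=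
  Measure.eq_infinitePi μ fun s t ht => hP s t fun k _ => ht k

section InfinitePi

variable {ι : Type*} {Ω : ι → Type*} [∀ i, MeasurableSpace (Ω i)]
  (μ : ∀ i, Measure (Ω i)) [∀ i, IsProbabilityMeasure (μ i)]

theorem lintegral_infinitePi_finset_prod (s : Finset ι) {g : ∀ i, Ω i → ℝ≥0∞}
    (hg : ∀ i, Measurable (g i)) :
    ∫⁻ ω, ∏ i ∈ s, g i (ω i) ∂Measure.infinitePi μ = ∏ i ∈ s, ∫⁻ x, g i x ∂μ i := by
  rw [lintegral_prod_eq_prod_lintegral_of_indepFun s _ (iIndepFun_infinitePi hg)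
    fun i => (hg i).comp (measurable_pi_apply i)]
  exact Finset.prod_congr rfl fun i _ =>
    (measurePreserving_eval_infinitePi μ i).lintegral_comp (hg i)

theorem pi_eq_withDensity_prod_rnDeriv [Fintype ι] (ν : ∀ i, Measure (Ω i))
    [∀ i, IsProbabilityMeasure (ν i)] (hν : ∀ i, ν i ≪ μ i) :
    Measure.pi ν = (Measure.pi μ).withDensity fun ω => ∏ i, (ν i).rnDeriv (μ i) (ω i) := by
  refine Measure.pi_eq fun E hE => ?_
  have hind : (univ.pi E).indicator (fun ω => ∏ i, (ν i).rnDeriv (μ i) (ω i))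
      = fun ω => ∏ i, (E i).indicator ((ν i).rnDeriv (μ i)) (ω i) := by
    ext ω
    by_cases h : ω ∈ univ.pi E
    · rw [indicator_of_mem h]
      exact Finset.prod_congr rfl fun i _ => (indicator_of_mem (h i (mem_univ i)) _).symm
    · obtain ⟨i, -, hi⟩ : ∃ i ∈ univ, ω i ∉ E i := by simpa [Set.mem_pi] using h
      rw [indicator_of_notMem h]
      exact (Finset.prod_eq_zero (Finset.mem_univ i) (indicator_of_notMem hi _)).symm
  rw [withDensity_apply _ (.univ_pi hE), ← lintegral_indicator (.univ_pi hE), hind,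
    ← Measure.infinitePi_eq_pi,
    lintegral_infinitePi_finset_prod μ _ fun i => (Measure.measurable_rnDeriv _ _).indicator (hE i)]
  refine Finset.prod_congr rfl fun i _ => ?_
  rw [lintegral_indicator (hE i), ← withDensity_apply _ (hE i),
    Measure.withDensity_rnDeriv_eq _ _ (hν i)]

theorem infinitePi_cylinder_eq_setLIntegral_prod_rnDeriv (ν : ∀ i, Measure (Ω i))
    [∀ i, IsProbabilityMeasure (ν i)] (hν : ∀ i, ν i ≪ μ i) {I s : Finset ι} (hIs : I ⊆ s)
    {S : Set (∀ i : I, Ω i)} (hS : MeasurableSet S) :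
    Measure.infinitePi ν (cylinder I S)
      = ∫⁻ ω in cylinder I S, ∏ i ∈ s, (ν i).rnDeriv (μ i) (ω i) ∂Measure.infinitePi μ := by
  have hT : MeasurableSet (Finset.restrict₂ hIs ⁻¹' S) := Finset.measurable_restrict₂ hIs hS
  have hcyl : cylinder I S = s.restrict ⁻¹' (Finset.restrict₂ hIs ⁻¹' S) := rfl
  rw [hcyl, ← Measure.map_apply (Finset.measurable_restrict s) hT,
    Measure.infinitePi_map_restrict,
    pi_eq_withDensity_prod_rnDeriv (fun i : s => μ i) (fun i : s => ν i) (fun i => hν i),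
    withDensity_apply _ hT, ← Measure.infinitePi_map_restrict μ,
    setLIntegral_map hT (by fun_prop) (Finset.measurable_restrict s)]
  congr! 2 with ω
  exact Finset.prod_coe_sort s fun i => (ν i).rnDeriv (μ i) (ω i)

end InfinitePi

noncomputable def hellingerAffinity {α : Type*} [MeasurableSpace α] (μ ν : Measure α) : ℝ≥0∞ :=
  ∫⁻ x, ν.rnDeriv μ x ^ (2⁻¹ : ℝ) ∂μ

theorem hellingerAffinity_le_one {α : Type*} [MeasurableSpace α] (μ ν : Measure α)
    [IsProbabilityMeasure μ] [IsProbabilityMeasure ν] : hellingerAffinity μ ν ≤ 1 := by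
  have hconj : Real.HolderConjugate 2 2 := Real.holderConjugate_iff.mpr ⟨one_lt_two, by norm_num⟩
  have h := ENNReal.lintegral_mul_le_Lp_mul_Lq μ hconj
    ((Measure.measurable_rnDeriv ν μ).pow_const (2⁻¹ : ℝ)).aemeasurable
    (aemeasurable_const (b := (1 : ℝ≥0∞)))
  have hsq : ∀ x, (ν.rnDeriv μ x ^ (2⁻¹ : ℝ)) ^ (2 : ℝ) = ν.rnDeriv μ x := fun x => by
    rw [← ENNReal.rpow_mul]; norm_num
  simp only [Pi.mul_apply, mul_one, hsq, ENNReal.one_rpow, lintegral_const, measure_univ] at h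
  calc hellingerAffinity μ ν ≤ (∫⁻ x, ν.rnDeriv μ x ∂μ) ^ (1 / 2 : ℝ) := by
        unfold hellingerAffinity; simpa using h
    _ ≤ 1 := ENNReal.rpow_le_one ((Measure.lintegral_rnDeriv_le).trans_eq measure_univ)
      (by norm_num)

section L2

variable {α : Type*} [MeasurableSpace α] {μ : Measure α}

theorem MeasureTheory.L2.real_inner_toLp {f g : α → ℝ} (hf : MemLp f 2 μ) (hg : MemLp g 2 μ) :
    ⟪hf.toLp f, hg.toLp g⟫_ℝ = ∫ x, f x * g x ∂μ := by
  rw [L2.inner_def]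
  refine integral_congr_ae ?_
  filter_upwards [hf.coeFn_toLp, hg.coeFn_toLp] with x hfx hgx
  rw [hfx, hgx, real_inner_eq_re_inner, RCLike.inner_apply]
  simp [mul_comm]

theorem MeasureTheory.L2.norm_sq_eq_integral_sq (f : Lp ℝ 2 μ) : ‖f‖ ^ 2 = ∫ x, f x ^ 2 ∂μ := by
  rw [← real_inner_self_eq_norm_sq, L2.inner_def]
  simp [sq]

theorem tendsto_setIntegral_sq_of_tendsto {ι : Type*} {l : Filter ι} {φ : ι → Lp ℝ 2 μ}
    {ζ : Lp ℝ 2 μ} (h : Tendsto φ l (𝓝 ζ)) (s : Set α) :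
    Tendsto (fun i => ∫ x in s, φ i x ^ 2 ∂μ) l (𝓝 (∫ x in s, ζ x ^ 2 ∂μ)) := by
  have hrestrict : ∀ g : Lp ℝ 2 μ,
      ∫ x in s, g x ^ 2 ∂μ = ‖LpToLpRestrictCLM α ℝ ℝ μ 2 s g‖ ^ 2 := fun g => by
    rw [L2.norm_sq_eq_integral_sq]
    refine integral_congr_ae ?_
    filter_upwards [LpToLpRestrictCLM_coeFn ℝ s g] with x hx
    rw [hx]
  simp_rw [hrestrict]
  exact (((LpToLpRestrictCLM α ℝ ℝ μ 2 s).continuous.tendsto ζ).comp h).norm.pow 2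

end L2

theorem cauchySeq_of_norm_eq_one_of_le_inner {E : Type*} [NormedAddCommGroup E]
    [InnerProductSpace ℝ E] {v : ℕ → E} (hv : ∀ n, ‖v n‖ = 1) {r : ℕ → ℝ}
    (hr : Tendsto r atTop (𝓝 1)) (h : ∀ m n, m ≤ n → r m ≤ ⟪v m, v n⟫_ℝ) : CauchySeq v := by
  refine cauchySeq_of_le_tendsto_0' (fun m => √(2 - 2 * r m)) (fun m n hmn => ?_) ?_
  · rw [dist_eq_norm, ← Real.sqrt_sq (norm_nonneg _), norm_sub_sq_real, hv, hv]
    exact Real.sqrt_le_sqrt (by linarith [h m n hmn])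
  · simpa using ((hr.const_mul 2).const_sub 2).sqrt

section Kakutani

variable {Ω : ℕ → Type*} [∀ k, MeasurableSpace (Ω k)]
  (μ ν : ∀ k, Measure (Ω k))

noncomputable def sqrtDensity (n : ℕ) (ω : ∀ k, Ω k) : ℝ≥0∞ :=
  ∏ k ∈ Finset.range n, (ν k).rnDeriv (μ k) (ω k) ^ (2⁻¹ : ℝ)

@[fun_prop]
theorem measurable_sqrtDensity (n : ℕ) : Measurable (sqrtDensity μ ν n) :=
  Finset.measurable_prod _ fun k _ =>
    ((Measure.measurable_rnDeriv _ _).comp (measurable_pi_apply k)).pow_const _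

theorem sqrtDensity_mul_self (n : ℕ) (ω : ∀ k, Ω k) :
    sqrtDensity μ ν n ω * sqrtDensity μ ν n ω
      = ∏ k ∈ Finset.range n, (ν k).rnDeriv (μ k) (ω k) := by
  rw [sqrtDensity, ← Finset.prod_mul_distrib]
  refine Finset.prod_congr rfl fun k _ => ?_
  rw [← ENNReal.rpow_add_of_nonneg _ _ (by norm_num) (by norm_num)]
  norm_num

variable {μ ν} [∀ k, IsProbabilityMeasure (μ k)] [∀ k, IsProbabilityMeasure (ν k)]

theorem lintegral_sqrtDensity_mul (hac : ∀ k, ν k ≪ μ k) {m n : ℕ} (hmn : m ≤ n) :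
    ∫⁻ ω, sqrtDensity μ ν m ω * sqrtDensity μ ν n ω ∂Measure.infinitePi μ
      = ∏ k ∈ Finset.Ico m n, hellingerAffinity (μ k) (ν k) := by
  set g : ∀ k, Ω k → ℝ≥0∞ := fun k x =>
    if k < m then (ν k).rnDeriv (μ k) x else (ν k).rnDeriv (μ k) x ^ (2⁻¹ : ℝ)
  have hg : ∀ k, Measurable (g k) := fun k => by
    by_cases hk : k < m <;> simp only [g, hk, if_true, if_false] <;> fun_prop
  have hprod : ∀ ω, sqrtDensity μ ν m ω * sqrtDensity μ ν n ω
      = ∏ k ∈ Finset.range n, g k (ω k) := fun ω => by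
    rw [← Finset.prod_range_mul_prod_Ico _ hmn, sqrtDensity, sqrtDensity,
      ← Finset.prod_range_mul_prod_Ico _ hmn, ← mul_assoc, ← sqrtDensity, sqrtDensity_mul_self]
    congr 1
    · exact Finset.prod_congr rfl fun k hk => by simp [g, Finset.mem_range.mp hk]
    · exact Finset.prod_congr rfl fun k hk => by simp [g, (Finset.mem_Ico.mp hk).1]
  simp_rw [hprod]
  rw [lintegral_infinitePi_finset_prod μ _ hg, ← Finset.prod_range_mul_prod_Ico _ hmn]
  have hlow : ∀ k ∈ Finset.range m, ∫⁻ x, g k x ∂μ k = 1 := fun k hk => by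
    simp only [g, Finset.mem_range.mp hk, if_true]
    rw [Measure.lintegral_rnDeriv (hac k), measure_univ]
  have hhigh : ∀ k ∈ Finset.Ico m n, ∫⁻ x, g k x ∂μ k = hellingerAffinity (μ k) (ν k) :=
    fun k hk => by simp [g, not_lt.mpr (Finset.mem_Ico.mp hk).1, hellingerAffinity]
  rw [Finset.prod_eq_one hlow, one_mul, Finset.prod_congr rfl hhigh]

theorem lintegral_sqrtDensity (hac : ∀ k, ν k ≪ μ k) (n : ℕ) :
    ∫⁻ ω, sqrtDensity μ ν n ω ∂Measure.infinitePi μ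
      = ∏ k ∈ Finset.range n, hellingerAffinity (μ k) (ν k) := by
  have h0 : ∀ ω, sqrtDensity μ ν 0 ω = 1 := fun ω => Finset.prod_range_zero _
  simpa only [h0, one_mul, Finset.range_eq_Ico] using lintegral_sqrtDensity_mul hac n.zero_le

theorem infinitePi_sqrtDensity_lt_le (hac : ∀ k, ν k ≪ μ k) (n : ℕ) (c : ℝ≥0∞) :
    Measure.infinitePi ν {ω | sqrtDensity μ ν n ω < c} ≤ c * c := by
  have hcyl : {ω | sqrtDensity μ ν n ω < c} = cylinder (Finset.range n)
      {y | ∏ k : Finset.range n, (ν k).rnDeriv (μ k) (y k) ^ (2⁻¹ : ℝ) < c} := by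
    ext ω
    simp only [mem_ofPred_eq, mem_cylinder, Finset.restrict, sqrtDensity]
    rw [Finset.prod_coe_sort (Finset.range n) fun k => (ν k).rnDeriv (μ k) (ω k) ^ (2⁻¹ : ℝ)]
  rw [hcyl, infinitePi_cylinder_eq_setLIntegral_prod_rnDeriv μ ν hac subset_rfl
    (measurableSet_lt (by fun_prop) measurable_const), ← hcyl]
  calc ∫⁻ ω in {ω | sqrtDensity μ ν n ω < c}, ∏ k ∈ Finset.range n, (ν k).rnDeriv (μ k) (ω k)
        ∂Measure.infinitePi μ
      ≤ ∫⁻ _ in {ω | sqrtDensity μ ν n ω < c}, c * c ∂Measure.infinitePi μ :=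
        setLIntegral_mono measurable_const fun ω hω => by
          rw [← sqrtDensity_mul_self]; exact mul_le_mul' hω.le hω.le
    _ ≤ c * c := by
        rw [setLIntegral_const]; exact mul_le_of_le_one_right' prob_le_one

theorem infinitePi_mutuallySingular_of_iInf_eq_zero (hac : ∀ k, ν k ≪ μ k)
    (h : ⨅ n, ∏ k ∈ Finset.range n, hellingerAffinity (μ k) (ν k) = 0) :
    Measure.infinitePi ν ⟂ₘ Measure.infinitePi μ := by
  refine Measure.mutuallySingular_of_forall_exists_le fun ε hε => ?_
  set c := min ε 1
  have hc0 : c ≠ 0 := (lt_min hε one_pos).ne'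
  have hctop : c ≠ ∞ := ne_top_of_le_ne_top one_ne_top (min_le_right _ _)
  obtain ⟨n, hn⟩ : ∃ n, ∏ k ∈ Finset.range n, hellingerAffinity (μ k) (ν k) < c * ε := by
    rw [← iInf_lt_iff, h]
    exact ENNReal.mul_pos hc0 hε.ne'
  refine ⟨{ω | sqrtDensity μ ν n ω < c}, measurableSet_lt (by fun_prop) measurable_const, ?_, ?_⟩
  · calc _ ≤ c * c := infinitePi_sqrtDensity_lt_le hac n c
      _ ≤ c * 1 := mul_le_mul_right (min_le_right _ _) c
      _ ≤ ε := (mul_one c).trans_le (min_le_left _ _)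
  · have hmarkov := mul_meas_ge_le_lintegral₀ (μ := Measure.infinitePi μ)
      (measurable_sqrtDensity μ ν n).aemeasurable c
    rw [lintegral_sqrtDensity hac] at hmarkov
    simp only [compl_ofPred, not_lt]
    exact (ENNReal.mul_le_mul_iff_right hc0 hctop).mp (hmarkov.trans hn.le)

theorem ae_sqrtDensity_lt_top (hac : ∀ k, ν k ≪ μ k) (n : ℕ) :
    ∀ᵐ ω ∂Measure.infinitePi μ, sqrtDensity μ ν n ω < ∞ := by
  refine ae_lt_top (measurable_sqrtDensity μ ν n) (ne_top_of_le_ne_top one_ne_top ?_)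
  rw [lintegral_sqrtDensity hac]
  exact Finset.prod_le_one' fun k _ => hellingerAffinity_le_one _ _

variable (μ ν) in
theorem memLp_sqrtDensity (n : ℕ) :
    MemLp (fun ω => (sqrtDensity μ ν n ω).toReal) 2 (Measure.infinitePi μ) := by
  refine (memLp_two_iff_integrable_sq
    (measurable_sqrtDensity μ ν n).ennreal_toReal.aestronglyMeasurable).mpr ?_
  simp_rw [sq, ← ENNReal.toReal_mul, sqrtDensity_mul_self]
  refine integrable_toReal_of_lintegral_ne_top
    (Finset.measurable_prod _ fun k _ => (Measure.measurable_rnDeriv _ _).comp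
      (measurable_pi_apply k)).aemeasurable (ne_top_of_le_ne_top one_ne_top ?_)
  rw [lintegral_infinitePi_finset_prod μ _ fun k => Measure.measurable_rnDeriv _ _]
  exact Finset.prod_le_one' fun k _ => Measure.lintegral_rnDeriv_le.trans_eq measure_univ

variable (μ ν) in
noncomputable def sqrtDensityLp (n : ℕ) : Lp ℝ 2 (Measure.infinitePi μ) :=
  (memLp_sqrtDensity μ ν n).toLp _

theorem inner_sqrtDensityLp (hac : ∀ k, ν k ≪ μ k) {m n : ℕ} (hmn : m ≤ n) :
    ⟪sqrtDensityLp μ ν m, sqrtDensityLp μ ν n⟫_ℝ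
      = (∏ k ∈ Finset.Ico m n, hellingerAffinity (μ k) (ν k)).toReal := by
  rw [sqrtDensityLp, sqrtDensityLp, L2.real_inner_toLp]
  simp_rw [← ENNReal.toReal_mul]
  rw [integral_toReal (by fun_prop), lintegral_sqrtDensity_mul hac hmn]
  filter_upwards [ae_sqrtDensity_lt_top hac m, ae_sqrtDensity_lt_top hac n] with ω hm hn
  exact ENNReal.mul_lt_top hm hn

theorem norm_sqrtDensityLp (hac : ∀ k, ν k ≪ μ k) (n : ℕ) : ‖sqrtDensityLp μ ν n‖ = 1 := by
  have h := inner_sqrtDensityLp hac (le_refl n)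
  rw [Finset.Ico_self, Finset.prod_empty, ENNReal.toReal_one, real_inner_self_eq_norm_sq] at h
  exact (pow_eq_one_iff_of_nonneg (norm_nonneg _) two_ne_zero).mp h

theorem cauchySeq_sqrtDensityLp (hac : ∀ k, ν k ≪ μ k)
    (h : ⨅ n, ∏ k ∈ Finset.range n, hellingerAffinity (μ k) (ν k) ≠ 0) :
    CauchySeq (sqrtDensityLp μ ν) := by
  set b : ℕ → ℝ≥0∞ := fun n => ∏ k ∈ Finset.range n, hellingerAffinity (μ k) (ν k)
  set L := ⨅ n, b n
  have hb1 : ∀ n, b n ≤ 1 := fun n => Finset.prod_le_one' fun k _ => hellingerAffinity_le_one _ _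
  have hbtop : ∀ n, b n ≠ ∞ := fun n => ne_top_of_le_ne_top one_ne_top (hb1 n)
  have hLb : ∀ n, L.toReal ≤ (b n).toReal := fun n => toReal_mono (hbtop n) (iInf_le b n)
  have hL : 0 < L.toReal := ENNReal.toReal_pos h (ne_top_of_le_ne_top (hbtop 0) (iInf_le b 0))
  have hb : Tendsto (fun n => (b n).toReal) atTop (𝓝 L.toReal) :=
    (ENNReal.tendsto_toReal (ne_top_of_le_ne_top (hbtop 0) (iInf_le b 0))).comp
      (tendsto_atTop_iInf fun m n hmn => Finset.prod_le_prod_of_subset_of_le_one'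
        (Finset.range_mono hmn) fun k _ _ => hellingerAffinity_le_one _ _)
  -- `⟪√X_m, √X_n⟫ = b n / b m ≥ L / b m`, and `L / b m → 1` because `L > 0`.
  refine cauchySeq_of_norm_eq_one_of_le_inner (norm_sqrtDensityLp hac)
    (r := fun m => L.toReal / (b m).toReal) ?_ fun m n hmn => ?_
  · rw [← div_self hL.ne']
    exact tendsto_const_nhds.div hb hL.ne'
  · rw [inner_sqrtDensityLp hac hmn, div_le_iff₀ (hL.trans_le (hLb m)), ← ENNReal.toReal_mul,
      mul_comm, Finset.prod_range_mul_prod_Ico _ hmn]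
    exact hLb n

theorem infinitePi_cylinder_eq_ofReal_setIntegral (hac : ∀ k, ν k ≪ μ k) {I : Finset ℕ} {n : ℕ}
    (hI : I ⊆ Finset.range n) {S : Set (∀ i : I, Ω i)} (hS : MeasurableSet S) :
    Measure.infinitePi ν (cylinder I S)
      = ENNReal.ofReal (∫ ω in cylinder I S, sqrtDensityLp μ ν n ω ^ 2 ∂Measure.infinitePi μ) := by
  rw [infinitePi_cylinder_eq_setLIntegral_prod_rnDeriv μ ν hac hI hS,
    ofReal_integral_eq_lintegral_ofReal (Lp.memLp _).integrable_sq.restrict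
      (ae_of_all _ fun _ => sq_nonneg _)]
  refine lintegral_congr_ae (ae_restrict_of_ae ?_)
  filter_upwards [(memLp_sqrtDensity μ ν n).coeFn_toLp, ae_sqrtDensity_lt_top hac n]
    with ω hω hfin
  rw [sqrtDensityLp, hω, sq, ENNReal.ofReal_mul toReal_nonneg, ENNReal.ofReal_toReal hfin.ne,
    sqrtDensity_mul_self]

theorem infinitePi_eq_withDensity_of_tendsto (hac : ∀ k, ν k ≪ μ k)
    {ζ : Lp ℝ 2 (Measure.infinitePi μ)} (hζ : Tendsto (sqrtDensityLp μ ν) atTop (𝓝 ζ)) :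
    Measure.infinitePi ν
      = (Measure.infinitePi μ).withDensity fun ω => ENNReal.ofReal (ζ ω ^ 2) := by
  have hcyl : ∀ (I : Finset ℕ) (S : Set (∀ i : I, Ω i)), MeasurableSet S →
      Measure.infinitePi ν (cylinder I S)
        = (Measure.infinitePi μ).withDensity (fun ω => ENNReal.ofReal (ζ ω ^ 2))
            (cylinder I S) := by
    intro I S hS
    obtain ⟨N, hN⟩ := I.exists_nat_subset_range
    rw [withDensity_apply _ (hS.cylinder I), ← ofReal_integral_eq_lintegral_ofReal
      (Lp.memLp ζ).integrable_sq.restrict (ae_of_all _ fun _ => sq_nonneg _)]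
    refine tendsto_nhds_unique (tendsto_const_nhds.congr' ?_)
      ((ENNReal.continuous_ofReal.tendsto _).comp (tendsto_setIntegral_sq_of_tendsto hζ _))
    filter_upwards [eventually_ge_atTop N] with n hn
    exact infinitePi_cylinder_eq_ofReal_setIntegral hac (hN.trans (Finset.range_mono hn)) hS
  refine ext_of_generate_finite _ generateFrom_measurableCylinders.symm
    isPiSystem_measurableCylinders ?_ ?_
  · intro C hC
    obtain ⟨I, S, hS, rfl⟩ := (mem_measurableCylinders C).mp hC
    exact hcyl I S hS
  · simpa using hcyl ∅ univ .univ

theorem infinitePi_absolutelyContinuous_of_iInf_ne_zero (hac : ∀ k, ν k ≪ μ k)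
    (h : ⨅ n, ∏ k ∈ Finset.range n, hellingerAffinity (μ k) (ν k) ≠ 0) :
    Measure.infinitePi ν ≪ Measure.infinitePi μ := by
  obtain ⟨ζ, hζ⟩ := cauchySeq_tendsto_of_complete (cauchySeq_sqrtDensityLp hac h)
  rw [infinitePi_eq_withDensity_of_tendsto hac hζ]
  exact withDensity_absolutelyContinuous _ _

end Kakutani

/-- Kakutani dichotomy: if `ν k ≪ μ k` for every `k`, then the infinite product measure
`Q = ⊗ ν k` is either absolutely continuous with respect to `P = ⊗ μ k` or mutually
singular with it. -/
theorem productMeasure_absolutelyContinuous_or_mutuallySingular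
    {Ω : ℕ → Type*} [∀ k, MeasurableSpace (Ω k)]
    (μ ν : (k : ℕ) → Measure (Ω k))
    [∀ k, IsProbabilityMeasure (μ k)] [∀ k, IsProbabilityMeasure (ν k)]
    (hac : ∀ k, ν k ≪ μ k)
    (P Q : Measure ((k : ℕ) → Ω k))
    (hP : IsProductMeasure μ P) (hQ : IsProductMeasure ν Q) :
    Q ≪ P ∨ Q.MutuallySingular P := by
  obtain rfl := hP.eq_infinitePi
  obtain rfl := hQ.eq_infinitePi
  by_cases h : ⨅ n, ∏ k ∈ Finset.range n, hellingerAffinity (μ k) (ν k) = 0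
  · exact Or.inr (infinitePi_mutuallySingular_of_iInf_eq_zero hac h)
  · exact Or.inl (infinitePi_absolutelyContinuous_of_iInf_ne_zero hac h)
end

section
/- Suppose there is k₀ such that δ_k > 1 (i.e., a_k > r_k) for all k > k₀. Then the set S of all subsums of the series Σ_k a_k is nowhere dense in ℝ. -/
/-!
Fix a subsum with choices `γ`. All subsums agreeing with `γ` below `m` lie in the interval
`[P, P + t]`, where `P = ∑_{k < m} γ_k a_k` and `t = ∑_{k ≥ m} a_k`; when every term exceeds the
tail after it, a subsum that differs from `γ` below `m` lies strictly outside this interval, since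
at the first difference the larger choice wins by more than everything that follows. Inside the
interval, `t = a_m + ∑_{k > m} a_k` places the midpoint `P + t / 2` in the gap between the subsums
with `γ_m = 0` and those with `γ_m = 1`, so no subsum equals it. As `t → 0`, the compact set of
subsums has empty interior.

When the terms only eventually exceed their tails, the finitely many choices of the first terms
cover the subsums by finitely many translates of the subsums of a tail series; this closed set is
then meagre, hence nowhere dense by Baire's theorem.
-/

open Filter Finset Topology

noncomputable def subsum (a : ℕ → ℝ) (γ : ℕ → Bool) : ℝ := ∑' k, if γ k then a k else 0

def partialSubsum (a : ℕ → ℝ) (γ : ℕ → Bool) (m : ℕ) : ℝ := ∑ k ∈ range m, if γ k then a k else 0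

lemma ite_zero_le_of_nonneg {α : Type*} [Preorder α] [Zero α] {x : α} (hx : 0 ≤ x) (p : Prop)
    [Decidable p] : (if p then x else 0) ≤ x := by
  split_ifs
  exacts [le_rfl, hx]

lemma tsum_nat_add_eq_add_tsum_nat_add_succ {a : ℕ → ℝ} (hs : Summable a) (m : ℕ) :
    ∑' i, a (i + m) = a m + ∑' i, a (i + (m + 1)) := by
  rw [((summable_nat_add_iff m).2 hs).tsum_eq_zero_add]
  simp only [zero_add, add_right_comm _ 1 m, add_assoc]

lemma partialSubsum_succ (a : ℕ → ℝ) (γ : ℕ → Bool) (m : ℕ) :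
    partialSubsum a γ (m + 1) = partialSubsum a γ m + if γ m then a m else 0 :=
  sum_range_succ _ m

lemma partialSubsum_congr {a : ℕ → ℝ} {β γ : ℕ → Bool} {m : ℕ} (h : ∀ k < m, β k = γ k) :
    partialSubsum a β m = partialSubsum a γ m :=
  sum_congr rfl fun k hk => by rw [h k (mem_range.1 hk)]

section Nonneg

variable {a : ℕ → ℝ} (ha : ∀ k, 0 ≤ a k)
include ha

lemma monotone_partialSubsum (γ : ℕ → Bool) : Monotone (partialSubsum a γ) :=
  monotone_nat_of_le_succ fun m => by
    rw [partialSubsum_succ]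
    exact le_add_of_nonneg_right (ite_nonneg (ha m) le_rfl)

variable (hs : Summable a)
include hs

lemma summable_ite_of_nonneg (γ : ℕ → Bool) : Summable fun k => if γ k then a k else 0 :=
  hs.of_nonneg_of_le (fun k => ite_nonneg (ha k) le_rfl) fun k => ite_zero_le_of_nonneg (ha k) _

lemma partialSubsum_add_subsum_nat_add (γ : ℕ → Bool) (m : ℕ) :
    partialSubsum a γ m + subsum (fun i => a (i + m)) (fun i => γ (i + m)) = subsum a γ :=
  (summable_ite_of_nonneg ha hs γ).sum_add_tsum_nat_add m

lemma partialSubsum_le_subsum (γ : ℕ → Bool) (m : ℕ) : partialSubsum a γ m ≤ subsum a γ := by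
  rw [← partialSubsum_add_subsum_nat_add ha hs γ m]
  exact le_add_of_nonneg_right (tsum_nonneg fun i => ite_nonneg (ha (i + m)) le_rfl)

lemma subsum_le_partialSubsum_add_tsum (γ : ℕ → Bool) (m : ℕ) :
    subsum a γ ≤ partialSubsum a γ m + ∑' i, a (i + m) := by
  rw [← partialSubsum_add_subsum_nat_add ha hs γ m]
  have hsm : Summable fun i => a (i + m) := (summable_nat_add_iff m).2 hs
  exact (add_le_add_iff_left _).2 ((summable_ite_of_nonneg (fun i => ha _) hsm _).tsum_le_tsum
    (fun i => ite_zero_le_of_nonneg (ha (i + m)) _) hsm)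

lemma antitone_partialSubsum_add_tsum (γ : ℕ → Bool) :
    Antitone fun m => partialSubsum a γ m + ∑' i, a (i + m) :=
  antitone_nat_of_succ_le fun m => by
    rw [partialSubsum_succ, tsum_nat_add_eq_add_tsum_nat_add_succ hs m]
    linarith [ite_zero_le_of_nonneg (ha m) (γ m)]

lemma isClosed_range_subsum : IsClosed (Set.range (subsum a)) := by
  refine (isCompact_range (continuous_tsum (fun k => ?_) hs fun k γ => ?_)).isClosed
  · exact (continuous_of_discreteTopology (f := fun b : Bool => if b then a k else 0)).comp
      (continuous_apply k)
  · rw [Real.norm_of_nonneg (ite_nonneg (ha k) le_rfl)]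
    exact ite_zero_le_of_nonneg (ha k) _

variable (htail : ∀ k, ∑' i, a (i + (k + 1)) < a k)
include htail

lemma subsum_lt_or_lt_of_exists_ne {β γ : ℕ → Bool} {m : ℕ} (h : ∃ k < m, β k ≠ γ k) :
    subsum a β < partialSubsum a γ m ∨ partialSubsum a γ m + ∑' i, a (i + m) < subsum a β := by
  classical
  have hex : ∃ k, β k ≠ γ k := let ⟨k, _, hk⟩ := h; ⟨k, hk⟩
  set j := Nat.find hex
  have hj : β j ≠ γ j := Nat.find_spec hex
  have hjm : j < m := let ⟨_, hkm, hk⟩ := h; (Nat.find_min' hex hk).trans_lt hkm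
  have hagree : partialSubsum a β j = partialSubsum a γ j :=
    partialSubsum_congr fun k hk => not_not.1 (Nat.find_min hex hk)
  have hgap := htail j
  cases hγj : γ j
  · have hβj : β j = true := by simpa [hγj] using hj
    right
    calc partialSubsum a γ m + ∑' i, a (i + m)
        ≤ partialSubsum a γ (j + 1) + ∑' i, a (i + (j + 1)) :=
          antitone_partialSubsum_add_tsum ha hs γ hjm
      _ < partialSubsum a β (j + 1) := by
          rw [partialSubsum_succ, partialSubsum_succ, hγj, hβj, hagree]
          simpa using hgap
      _ ≤ subsum a β := partialSubsum_le_subsum ha hs β _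
  · have hβj : β j = false := by simpa [hγj] using hj
    left
    calc subsum a β ≤ partialSubsum a β (j + 1) + ∑' i, a (i + (j + 1)) :=
          subsum_le_partialSubsum_add_tsum ha hs β _
      _ < partialSubsum a γ (j + 1) := by
          rw [partialSubsum_succ, partialSubsum_succ, hγj, hβj, hagree]
          simpa using hgap
      _ ≤ partialSubsum a γ m := monotone_partialSubsum ha γ hjm

lemma subsum_ne_partialSubsum_add_half_tsum (β γ : ℕ → Bool) (m : ℕ) :
    subsum a β ≠ partialSubsum a γ m + (∑' i, a (i + m)) / 2 := by
  intro hβ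
  have htail_nonneg (n : ℕ) : 0 ≤ ∑' i, a (i + n) := tsum_nonneg fun i => ha (i + n)
  have hagree : ∀ k < m, β k = γ k := by
    by_contra! hne
    rcases subsum_lt_or_lt_of_exists_ne ha hs htail hne with h | h <;>
      linarith [htail_nonneg m]
  have hlow := partialSubsum_le_subsum ha hs β (m + 1)
  have hup := subsum_le_partialSubsum_add_tsum ha hs β (m + 1)
  rw [partialSubsum_succ, partialSubsum_congr hagree] at hlow hup
  rw [tsum_nat_add_eq_add_tsum_nat_add_succ hs m] at hβ
  have hgap := htail m
  cases hβm : β m <;> simp only [hβm, Bool.false_eq_true, ↓reduceIte, add_zero] at hlow hup <;>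
    linarith [htail_nonneg (m + 1)]

lemma interior_range_subsum_eq_empty : interior (Set.range (subsum a)) = ∅ := by
  refine Set.eq_empty_of_forall_notMem fun x hx => ?_
  obtain ⟨ε, hε, hball⟩ := Metric.mem_nhds_iff.1 (mem_interior_iff_mem_nhds.1 hx)
  obtain ⟨γ, rfl⟩ := interior_subset hx
  obtain ⟨m, hm⟩ := ((tendsto_sum_nat_add a).eventually (gt_mem_nhds hε)).exists
  have hy : partialSubsum a γ m + (∑' i, a (i + m)) / 2 ∈ Metric.ball (subsum a γ) ε := by
    rw [Metric.mem_ball, Real.dist_eq, abs_lt]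
    have := partialSubsum_le_subsum ha hs γ m
    have := subsum_le_partialSubsum_add_tsum ha hs γ m
    constructor <;> linarith
  obtain ⟨β, hβ⟩ := hball hy
  exact subsum_ne_partialSubsum_add_half_tsum ha hs htail β γ m hβ

lemma isNowhereDense_range_subsum : IsNowhereDense (Set.range (subsum a)) :=
  (isClosed_range_subsum ha hs).isNowhereDense_iff.2 (interior_range_subsum_eq_empty ha hs htail)

end Nonneg

lemma range_subsum_subset_biUnion {a : ℕ → ℝ} (ha : ∀ k, 0 ≤ a k) (hs : Summable a) (m : ℕ) :
    Set.range (subsum a) ⊆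
      ⋃ s ∈ ((range m).powerset : Set (Finset ℕ)),
        (∑ k ∈ s, a k + ·) '' Set.range (subsum fun i => a (i + m)) := by
  rintro _ ⟨γ, rfl⟩
  refine Set.mem_biUnion (x := (range m).filter (γ ·)) (mem_powerset.2 (filter_subset _ _))
    ⟨_, ⟨fun i => γ (i + m), rfl⟩, ?_⟩
  rw [sum_filter, ← partialSubsum_add_subsum_nat_add ha hs γ m]
  rfl

lemma IsClosed.isNowhereDense_of_isMeagre {X : Type*} [TopologicalSpace X] [BaireSpace X]
    {s : Set X} (hs : IsClosed s) (hm : IsMeagre s) : IsNowhereDense s :=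
  hs.isNowhereDense_iff.2 (interior_eq_empty_iff_dense_compl.2 (dense_of_mem_residual hm))

/-- If `a k > r k` (i.e. `δ k > 1`) for all sufficiently large `k`, where
`r k = ∑_{i > k} a i` is the tail of the positive series `∑ a k = 1`, then the set of
all subsums of the series is nowhere dense in `ℝ`. -/
theorem subsums_isNowhereDense_of_eventually_tail_lt
    (a : ℕ → ℝ) (ha : ∀ k, 0 < a k) (hsum : ∑' k, a k = 1)
    (r : ℕ → ℝ) (hr : ∀ k, r k = ∑' i : ℕ, a (k + 1 + i))
    (hδ : ∃ k₀, ∀ k > k₀, r k < a k)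
    (S : Set ℝ)
    (hS : S = {x | ∃ γ : ℕ → Bool, x = ∑' k : ℕ, if γ k then a k else 0}) :
    IsNowhereDense S := by
  have hs : Summable a := by
    by_contra h
    simp [tsum_eq_zero_of_not_summable h] at hsum
  have ha' (k : ℕ) : 0 ≤ a k := (ha k).le
  obtain ⟨k₀, hk₀⟩ := hδ
  have htail (k : ℕ) : ∑' i, a (i + (k + 1) + (k₀ + 1)) < a (k + (k₀ + 1)) := by
    have := hk₀ (k + (k₀ + 1)) (by omega)
    rw [hr] at this
    convert this using 4 with i
    ring
  have hT : IsNowhereDense (Set.range (subsum fun i => a (i + (k₀ + 1)))) :=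
    isNowhereDense_range_subsum (fun k => ha' _) ((summable_nat_add_iff _).2 hs) htail
  have hmeagre : IsMeagre (Set.range (subsum a)) :=
    (isMeagre_biUnion (range (k₀ + 1)).powerset.countable_toSet fun _ _ =>
      ((Homeomorph.addLeft _).isInducing.isNowhereDense_image hT).isMeagre).mono
      (range_subsum_subset_biUnion ha' hs (k₀ + 1))
  have hS' : S = Set.range (subsum a) := hS ▸ Set.ext fun _ => exists_congr fun _ => eq_comm
  rw [hS']
  exact (isClosed_range_subsum ha' hs).isNowhereDense_of_isMeagre hmeagre
end

section
/- Suppose there is k₀ such that δ_k > 1 (i.e., a_k > r_k) for all k > k₀. Then the set S of all subsums of the series Σ_k a_k has positive Lebesgue measure if and only if Σ_{k=1}^∞ (δ_k − 1) < ∞. -/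
/-!
If `tail b (k + 1) < b k` for every `k`, the subsums of `b 0, …, b (n - 1)` are the left ends
of `2 ^ n` pairwise disjoint intervals of length `tail b n`, and these unions decrease to the
set of all subsums, whose measure is therefore `lim 2 ^ n * tail b n`. With
`δ n = b n / tail b (n + 1)`, the identity
`2 ^ n * tail b n = 2 ^ (n + 1) * tail b (n + 1) * (1 + (δ n - 1) / 2)` makes this limit
positive exactly when `∑ (δ n - 1)` converges. Initial terms do not matter: if `S'` is the set
of subsums of the shifted series, the subsums of `b` form `S' ∪ (b 0 + S')`, which is null
exactly when `S'` is.
-/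

open MeasureTheory Filter Topology
open scoped Pointwise

theorem exists_pos_le_iff_summable {P x : ℕ → ℝ} (hP : ∀ n, 0 < P n) (hx : ∀ n, 0 ≤ x n)
    (hPx : ∀ n, P n = P (n + 1) * (1 + x n)) : (∃ c > 0, ∀ n, c ≤ P n) ↔ Summable x := by
  constructor
  · rintro ⟨c, hc, hcP⟩
    -- `c * x n ≤ P (n + 1) * x n = P n - P (n + 1)` telescopes
    have hsum : ∀ n, c * ∑ k ∈ Finset.range n, x k ≤ P 0 - P n := by
      intro n
      induction n with
      | zero => simp
      | succ n ih =>
        rw [Finset.sum_range_succ, mul_add]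
        nlinarith [hPx n, hcP (n + 1), hx n]
    refine summable_of_sum_range_le (c := P 0 / c) hx fun n => ?_
    rw [le_div_iff₀ hc, mul_comm]
    linarith [hsum n, hP n]
  · intro hs
    -- `P (n + 1) = P n / (1 + x n) ≥ P n * exp (- x n)` telescopes
    have hlow : ∀ n, P 0 * Real.exp (-∑ k ∈ Finset.range n, x k) ≤ P n := by
      intro n
      induction n with
      | zero => simp
      | succ n ih =>
        have h1 : 1 + x n ≤ Real.exp (x n) := by linarith [Real.add_one_le_exp (x n)]
        have h2 : P n * Real.exp (-x n) ≤ P (n + 1) := by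
          rw [Real.exp_neg, ← div_eq_mul_inv, div_le_iff₀ (Real.exp_pos _), hPx n]
          exact mul_le_mul_of_nonneg_left h1 (hP _).le
        calc P 0 * Real.exp (-∑ k ∈ Finset.range (n + 1), x k)
            = P 0 * Real.exp (-∑ k ∈ Finset.range n, x k) * Real.exp (-x n) := by
              rw [Finset.sum_range_succ, neg_add, Real.exp_add, mul_assoc]
          _ ≤ P n * Real.exp (-x n) := by gcongr
          _ ≤ P (n + 1) := h2
    refine ⟨P 0 * Real.exp (-∑' k, x k), mul_pos (hP 0) (Real.exp_pos _), fun n => ?_⟩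
    calc P 0 * Real.exp (-∑' k, x k) ≤ P 0 * Real.exp (-∑ k ∈ Finset.range n, x k) := by
          have := hP 0
          gcongr
          exact hs.sum_le_tsum _ fun k _ => hx k
      _ ≤ P n := hlow n

theorem ENNReal.zero_lt_iInf_ofReal_iff {ι : Sort*} {f : ι → ℝ} :
    0 < ⨅ i, ENNReal.ofReal (f i) ↔ ∃ c > 0, ∀ i, c ≤ f i := by
  rw [lt_iInf_iff]
  constructor
  · rintro ⟨b, hb, hbf⟩
    have hb' : 0 < min b 1 := lt_min hb one_pos
    refine ⟨(min b 1).toReal, ENNReal.toReal_pos hb'.ne' (min_lt_of_right_lt ENNReal.one_lt_top).ne,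
      fun i => ?_⟩
    have h := (min_le_left b 1).trans (hbf i)
    exact ENNReal.toReal_le_of_le_ofReal (ENNReal.ofReal_pos.1 (hb'.trans_le h)).le h
  · rintro ⟨c, hc, hcf⟩
    exact ⟨ENNReal.ofReal c, ENNReal.ofReal_pos.2 hc, fun i => ENNReal.ofReal_le_ofReal (hcf i)⟩

namespace Subsums

noncomputable def tail (b : ℕ → ℝ) (n : ℕ) : ℝ := ∑' i, b (n + i)

noncomputable def subsum (b : ℕ → ℝ) (γ : ℕ → Bool) : ℝ := ∑' k, if γ k then b k else 0

def subsums (b : ℕ → ℝ) : Set ℝ := Set.range (subsum b)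

/-- The union of the intervals `[s, s + tail b n]`, `s` a subsum of `b 0, …, b (n - 1)`,
built by recursion on the first term. -/
def stage : (ℕ → ℝ) → ℕ → Set ℝ
  | b, 0 => Set.Icc 0 (tail b 0)
  | b, n + 1 => stage (fun k => b (k + 1)) n ∪ (b 0 +ᵥ stage (fun k => b (k + 1)) n)

variable {b : ℕ → ℝ}

lemma tail_shift (b : ℕ → ℝ) (m n : ℕ) : tail (fun k => b (k + m)) n = tail b (n + m) :=
  tsum_congr fun i => congrArg b (by omega)

lemma tail_eq_add (hb : Summable b) (n : ℕ) : tail b n = b n + tail b (n + 1) := by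
  have hbn : Summable fun i => b (n + i) := by
    simpa only [add_comm] using (summable_nat_add_iff n).2 hb
  simp only [tail, hbn.tsum_eq_zero_add, add_zero, add_assoc, add_comm 1]

lemma tail_nonneg (hb0 : ∀ k, 0 ≤ b k) (n : ℕ) : 0 ≤ tail b n :=
  tsum_nonneg fun _ => hb0 _

lemma tail_pos (hb : Summable b) (hpos : ∀ k, 0 < b k) (n : ℕ) : 0 < tail b n := by
  rw [tail_eq_add hb]
  exact add_pos_of_pos_of_nonneg (hpos n) (tail_nonneg (fun k => (hpos k).le) _)

lemma tendsto_tail_zero (b : ℕ → ℝ) : Tendsto (tail b) atTop (𝓝 0) :=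
  (tendsto_sum_nat_add b).congr fun n => tsum_congr fun k => by rw [add_comm]

lemma subsum_eq_add (hb : Summable b) (γ : ℕ → Bool) :
    subsum b γ = (if γ 0 then b 0 else 0) + subsum (fun k => b (k + 1)) (fun k => γ (k + 1)) := by
  have hγ : Summable fun k => if γ k then b k else 0 := by
    refine (hb.indicator {k | γ k}).congr fun k => ?_
    by_cases h : γ k <;> simp [h]
  exact hγ.tsum_eq_zero_add

lemma subsums_eq_union (hb : Summable b) :
    subsums b = subsums (fun k => b (k + 1)) ∪ (b 0 +ᵥ subsums fun k => b (k + 1)) := by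
  apply Set.Subset.antisymm
  · rintro _ ⟨γ, rfl⟩
    rw [subsum_eq_add hb]
    cases γ 0
    · exact Or.inl ⟨_, (zero_add _).symm⟩
    · exact Or.inr ⟨_, ⟨_, rfl⟩, rfl⟩
  · rintro _ (⟨γ, rfl⟩ | ⟨_, ⟨γ, rfl⟩, rfl⟩)
    · exact ⟨fun k => Nat.casesOn k false γ, by rw [subsum_eq_add hb]; simp⟩
    · exact ⟨fun k => Nat.casesOn k true γ, by rw [subsum_eq_add hb]; simp⟩

lemma subsum_mem_Icc (hb0 : ∀ k, 0 ≤ b k) (hb : Summable b) (γ : ℕ → Bool) :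
    subsum b γ ∈ Set.Icc 0 (tail b 0) := by
  have hγ : ∀ k, (if γ k then b k else 0) ≤ b k := fun k => by split <;> simp [hb0 k]
  refine ⟨tsum_nonneg fun k => by split <;> simp [hb0 k], ?_⟩
  simpa only [subsum, tail, zero_add] using
    Summable.tsum_le_tsum hγ (hb.of_nonneg_of_le (fun k => by split <;> simp [hb0 k]) hγ) hb

lemma isClosed_subsums (hb : Summable b) : IsClosed (subsums b) := by
  refine (isCompact_range ?_).isClosed
  refine continuous_tsum (f := fun k (γ : ℕ → Bool) => if γ k then b k else 0)
    (fun k => ?_) hb.abs fun k γ => ?_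
  · exact (continuous_of_discreteTopology (f := fun v : Bool => if v then b k else 0)).comp
      (continuous_apply k)
  · split <;> simp

lemma measurableSet_stage (b : ℕ → ℝ) (n : ℕ) : MeasurableSet (stage b n) := by
  induction n generalizing b with
  | zero => exact measurableSet_Icc
  | succ n ih => exact (ih _).union ((ih _).const_vadd _)

lemma stage_subset_Icc (hb0 : ∀ k, 0 ≤ b k) (hb : Summable b) (n : ℕ) :
    stage b n ⊆ Set.Icc 0 (tail b 0) := by
  induction n generalizing b with
  | zero => exact subset_rfl
  | succ n ih =>
    have h := ih (fun k => hb0 _) ((summable_nat_add_iff 1).2 hb)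
    rw [tail_shift b 1 0, zero_add] at h
    have htail := tail_eq_add hb 0
    rintro _ (hx | ⟨x, hx, rfl⟩) <;> obtain ⟨hx0, hx1⟩ := h hx
    · exact ⟨hx0, by linarith [hb0 0]⟩
    · simp only [vadd_eq_add, Set.mem_Icc]
      constructor <;> linarith [hb0 0]

lemma antitone_stage (hb0 : ∀ k, 0 ≤ b k) (hb : Summable b) : Antitone (stage b) := by
  refine antitone_nat_of_succ_le fun n => ?_
  induction n generalizing b with
  | zero => exact stage_subset_Icc hb0 hb 1
  | succ n ih =>
    have h := ih (fun k => hb0 _) ((summable_nat_add_iff 1).2 hb)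
    exact Set.union_subset_union h (Set.vadd_set_mono h)

lemma subsums_subset_stage (hb0 : ∀ k, 0 ≤ b k) (hb : Summable b) (n : ℕ) :
    subsums b ⊆ stage b n := by
  induction n generalizing b with
  | zero => rintro _ ⟨γ, rfl⟩; exact subsum_mem_Icc hb0 hb γ
  | succ n ih =>
    have h := ih (fun k => hb0 _) ((summable_nat_add_iff 1).2 hb)
    rw [subsums_eq_union hb]
    exact Set.union_subset_union h (Set.vadd_set_mono h)

lemma exists_subsum_le_le_of_mem_stage (hb0 : ∀ k, 0 ≤ b k) (hb : Summable b) {n : ℕ} {x : ℝ}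
    (hx : x ∈ stage b n) : ∃ y ∈ subsums b, y ≤ x ∧ x ≤ y + tail b n := by
  induction n generalizing b x with
  | zero => exact ⟨0, ⟨fun _ => false, by simp [subsum]⟩, hx.1, by simpa using hx.2⟩
  | succ n ih =>
    rw [subsums_eq_union hb, ← tail_shift b 1 n]
    rcases hx with hx | ⟨x, hx, rfl⟩ <;>
      obtain ⟨y, hy, hyx, hxy⟩ := ih (fun k => hb0 _) ((summable_nat_add_iff 1).2 hb) hx
    · exact ⟨y, Or.inl hy, hyx, hxy⟩
    · refine ⟨b 0 + y, Or.inr ⟨y, hy, rfl⟩, ?_, ?_⟩ <;> simp only [vadd_eq_add] <;> linarith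

lemma iInter_stage (hb0 : ∀ k, 0 ≤ b k) (hb : Summable b) : ⋂ n, stage b n = subsums b := by
  refine subset_antisymm (fun x hx => ?_) (Set.subset_iInter (subsums_subset_stage hb0 hb))
  rw [← (isClosed_subsums hb).closure_eq, Metric.mem_closure_iff]
  intro ε hε
  obtain ⟨n, hn⟩ := ((tendsto_tail_zero b).eventually (gt_mem_nhds hε)).exists
  obtain ⟨y, hy, hyx, hxy⟩ := exists_subsum_le_le_of_mem_stage hb0 hb (Set.mem_iInter.1 hx n)
  exact ⟨y, hy, by rw [Real.dist_eq, abs_lt]; constructor <;> linarith⟩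

lemma volume_stage (hb0 : ∀ k, 0 ≤ b k) (hb : Summable b) (hsep : ∀ k, tail b (k + 1) < b k)
    (n : ℕ) : volume (stage b n) = ENNReal.ofReal (2 ^ n * tail b n) := by
  induction n generalizing b with
  | zero => simp [stage]
  | succ n ih =>
    have hb' : Summable fun k => b (k + 1) := (summable_nat_add_iff 1).2 hb
    have hsep' : ∀ k, tail (fun k => b (k + 1)) (k + 1) < b (k + 1) := fun k => by
      rw [tail_shift]; exact hsep (k + 1)
    have hdisj : Disjoint (stage (fun k => b (k + 1)) n) (b 0 +ᵥ stage (fun k => b (k + 1)) n) := by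
      have h := stage_subset_Icc (fun k => hb0 _) hb' n
      rw [tail_shift b 1 0, zero_add] at h
      refine Set.disjoint_left.2 fun x hx ⟨y, hy, hyx⟩ => ?_
      simp only [vadd_eq_add] at hyx
      linarith [(h hx).2, (h hy).1, hsep 0]
    have htail := tail_nonneg hb0 (n + 1)
    rw [stage, measure_union hdisj ((measurableSet_stage _ n).const_vadd _), measure_vadd,
      ih (fun k => hb0 _) hb' hsep', tail_shift, ← ENNReal.ofReal_add (by positivity) (by positivity)]
    ring_nf

lemma volume_subsums (hb0 : ∀ k, 0 ≤ b k) (hb : Summable b) (hsep : ∀ k, tail b (k + 1) < b k) :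
    volume (subsums b) = ⨅ n, ENNReal.ofReal (2 ^ n * tail b n) := by
  rw [← iInter_stage hb0 hb, Antitone.measure_iInter (antitone_stage hb0 hb)
    (fun n => (measurableSet_stage b n).nullMeasurableSet)
    ⟨0, by simp [volume_stage hb0 hb hsep]⟩]
  simp only [volume_stage hb0 hb hsep]

lemma volume_subsums_eq_zero_iff_succ (hb : Summable b) :
    volume (subsums b) = 0 ↔ volume (subsums fun k => b (k + 1)) = 0 := by
  rw [subsums_eq_union hb]
  exact ⟨fun h => measure_mono_null Set.subset_union_left h,
    fun h => measure_union_null h (by rwa [measure_vadd])⟩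

lemma volume_subsums_eq_zero_iff_add (hb : Summable b) (m : ℕ) :
    volume (subsums b) = 0 ↔ volume (subsums fun k => b (k + m)) = 0 := by
  induction m with
  | zero => rfl
  | succ m ih =>
    rw [ih, volume_subsums_eq_zero_iff_succ ((summable_nat_add_iff m).2 hb)]
    simp only [add_right_comm _ 1 m, add_assoc]

theorem volume_subsums_pos_iff_summable (hb : Summable b) (hpos : ∀ k, 0 < b k)
    (hsep : ∀ k, tail b (k + 1) < b k) :
    0 < volume (subsums b) ↔ Summable fun k => b k / tail b (k + 1) - 1 := by
  have ht := tail_pos hb hpos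
  rw [volume_subsums (fun k => (hpos k).le) hb hsep, ENNReal.zero_lt_iInf_ofReal_iff,
    exists_pos_le_iff_summable (x := fun k => (b k / tail b (k + 1) - 1) / 2)
      (fun n => mul_pos (pow_pos two_pos n) (ht n))
      (fun k => by have := (one_lt_div (ht (k + 1))).2 (hsep k); linarith)
      (fun n => by have := (ht (n + 1)).ne'; rw [tail_eq_add hb n, pow_succ]; field_simp; ring),
    summable_div_const_iff two_ne_zero]

end Subsums

open Subsums in
/-- Suppose `a k > r k` (i.e. `δ k > 1`) for all sufficiently large `k`, where
`r k = ∑_{i > k} a i` is the tail of the positive series `∑ a k = 1`.  Then the set of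
all subsums of the series has positive Lebesgue measure if and only if
`∑ (δ k - 1) < ∞`, where `δ k = a k / r k`. -/
theorem subsums_pos_volume_iff_summable
    (a : ℕ → ℝ) (ha : ∀ k, 0 < a k) (hsum : ∑' k, a k = 1)
    (r : ℕ → ℝ) (hr : ∀ k, r k = ∑' i : ℕ, a (k + 1 + i))
    (hδ : ∃ k₀, ∀ k > k₀, r k < a k)
    (S : Set ℝ)
    (hS : S = {x | ∃ γ : ℕ → Bool, x = ∑' k : ℕ, if γ k then a k else 0}) :
    0 < volume S ↔ Summable (fun k => a k / r k - 1) := by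
  obtain ⟨k₀, hk₀⟩ := hδ
  have ha_summable : Summable a := by
    by_contra h
    simp [tsum_eq_zero_of_not_summable h] at hsum
  have hS' : S = subsums a := hS ▸ Set.ext fun _ => exists_congr fun _ => eq_comm
  have hr' : ∀ k, r (k + (k₀ + 1)) = tail (fun k => a (k + (k₀ + 1))) (k + 1) := fun k => by
    rw [hr, tail]
    exact tsum_congr fun i => congrArg a (by omega)
  have hshift := (summable_nat_add_iff (k₀ + 1)).2 ha_summable
  have hsep : ∀ k, tail (fun k => a (k + (k₀ + 1))) (k + 1) < a (k + (k₀ + 1)) := fun k => by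
    rw [← hr']
    exact hk₀ _ (by omega)
  rw [hS', pos_iff_ne_zero, Ne, volume_subsums_eq_zero_iff_add ha_summable (k₀ + 1), ← Ne,
    ← pos_iff_ne_zero, volume_subsums_pos_iff_summable hshift (fun k => ha _) hsep,
    ← summable_nat_add_iff (k₀ + 1) (f := fun k => a k / r k - 1)]
  simp only [hr']
end

section
/- Let (p_k)_{k≥1} be a sequence with p_k ∈ [0,1] for all k. Then the infinite product Π_{k=1}^∞ (√(p_k/2) + √((1−p_k)/2)) is strictly positive if and only if Σ_{k=1}^∞ (1/2 − p_k)² < ∞. -/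
/-!
Squaring a factor gives `(√(p/2) + √((1-p)/2))² = 1 - a` with `a = 1/2 - √(1/4 - (1/2-p)²)`,
and `(1/2-p)² ≤ a ≤ 2(1/2-p)²`. A product of factors in `(0,1]` stays away from `0` exactly when
the series of their negative logarithms converges, and `a ≤ -log(1-a) ≤ 2a` for `a ∈ [0,1/2]`.
-/

open Real Filter Topology Finset

theorem summable_iff_of_le_of_le_mul {ι : Type*} {f g : ι → ℝ} {C : ℝ} (hg : ∀ i, 0 ≤ g i)
    (hgf : ∀ i, g i ≤ f i) (hfg : ∀ i, f i ≤ C * g i) : Summable f ↔ Summable g :=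
  ⟨fun h => h.of_nonneg_of_le hg hgf,
    fun h => (h.mul_left C).of_nonneg_of_le (fun i => (hg i).trans (hgf i)) hfg⟩

namespace Real

theorem iInf_prod_range_pos_iff_summable_neg_log {f : ℕ → ℝ} (hf₀ : ∀ k, 0 < f k)
    (hf₁ : ∀ k, f k ≤ 1) :
    (0 < ⨅ n, ∏ k ∈ range n, f k) ↔ Summable fun k => -log (f k) := by
  have hL : ∀ k, 0 ≤ -log (f k) := fun k => neg_nonneg.2 (log_nonpos (hf₀ k).le (hf₁ k))
  have hprod : ∀ n, ∏ k ∈ range n, f k = exp (-∑ k ∈ range n, -log (f k)) := by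
    intro n
    rw [sum_neg_distrib, neg_neg, exp_sum]
    exact prod_congr rfl fun k _ => (exp_log (hf₀ k)).symm
  simp only [hprod]
  constructor
  · intro hpos
    by_contra hns
    have h0 : Tendsto (fun n => exp (-∑ k ∈ range n, -log (f k))) atTop (𝓝 0) :=
      tendsto_exp_atBot.comp <| tendsto_neg_atTop_atBot.comp <|
        (not_summable_iff_tendsto_nat_atTop_of_nonneg hL).1 hns
    have hbdd : BddBelow (Set.range fun n => exp (-∑ k ∈ range n, -log (f k))) :=
      ⟨0, by rintro _ ⟨n, rfl⟩; positivity⟩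
    exact hpos.not_ge (ge_of_tendsto' h0 fun n => ciInf_le hbdd n)
  · intro hsum
    refine (exp_pos (-∑' k, -log (f k))).trans_le (le_ciInf fun n => ?_)
    exact exp_le_exp.2 (neg_le_neg (hsum.sum_le_tsum _ fun k _ => hL k))

theorem le_neg_log_one_sub {a : ℝ} (ha : a < 1) : a ≤ -log (1 - a) := by
  linarith [log_le_sub_one_of_pos (sub_pos.2 ha)]

theorem neg_log_one_sub_le_two_mul {a : ℝ} (ha₀ : 0 ≤ a) (ha : a ≤ 1 / 2) :
    -log (1 - a) ≤ 2 * a := by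
  have h := one_sub_inv_le_log_of_pos (x := 1 - a) (by linarith)
  have hinv : (1 - a)⁻¹ ≤ 1 + 2 * a := by
    rw [inv_le_iff_one_le_mul₀ (by linarith)]
    nlinarith
  linarith

end Real

theorem le_half_sub_sqrt_quarter_sub {t : ℝ} (ht : t ≤ 1 / 2) : t ≤ 1 / 2 - √(1 / 4 - t) := by
  have : √(1 / 4 - t) ≤ 1 / 2 - t := sqrt_le_iff.2 ⟨by linarith, by nlinarith [sq_nonneg t]⟩
  linarith

theorem half_sub_sqrt_quarter_sub_le {t : ℝ} (ht : 0 ≤ t) : 1 / 2 - √(1 / 4 - t) ≤ 2 * t := by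
  rcases le_or_gt (1 / 2 - 2 * t) 0 with h | h
  · linarith [sqrt_nonneg (1 / 4 - t)]
  · have : 1 / 2 - 2 * t ≤ √(1 / 4 - t) := (le_sqrt h.le (by linarith)).2 (by nlinarith)
    linarith

theorem sqrt_half_add_sqrt_one_sub_half_sq {p : ℝ} (hp₀ : 0 ≤ p) (hp₁ : p ≤ 1) :
    (√(p / 2) + √((1 - p) / 2)) ^ 2 = 1 - (1 / 2 - √(1 / 4 - (1 / 2 - p) ^ 2)) := by
  have hprod : √(p / 2) * √((1 - p) / 2) = √(1 / 4 - (1 / 2 - p) ^ 2) / 2 := by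
    rw [← sqrt_mul (by linarith),
      show p / 2 * ((1 - p) / 2) = (1 / 4 - (1 / 2 - p) ^ 2) / 4 by ring,
      sqrt_div' _ (by norm_num : (0 : ℝ) ≤ 4), show (4 : ℝ) = 2 ^ 2 by norm_num, sqrt_sq two_pos.le]
  rw [add_sq, mul_assoc, hprod, sq_sqrt (by linarith), sq_sqrt (by linarith)]
  ring

/-- For `pₖ ∈ [0,1]`, the infinite product `∏ (√(pₖ/2) + √((1-pₖ)/2))` is strictly
positive if and only if `∑ (1/2 - pₖ)² < ∞`.  Since each factor lies in `[0,1]`, the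
partial products are nonincreasing and the infinite product is their infimum. -/
theorem infinite_product_sqrt_pos_iff_summable_sq
    (p : ℕ → ℝ) (hp : ∀ k, p k ∈ Set.Icc (0 : ℝ) 1) :
    (0 < ⨅ n : ℕ, ∏ k ∈ Finset.range n,
        (Real.sqrt (p k / 2) + Real.sqrt ((1 - p k) / 2))) ↔
      Summable fun k => (1 / 2 - p k) ^ 2 := by
  set f : ℕ → ℝ := fun k => √(p k / 2) + √((1 - p k) / 2)
  set a : ℕ → ℝ := fun k => 1 / 2 - √(1 / 4 - (1 / 2 - p k) ^ 2)
  have hsq : ∀ k, f k ^ 2 = 1 - a k := fun k =>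
    sqrt_half_add_sqrt_one_sub_half_sq (hp k).1 (hp k).2
  have ha_ge : ∀ k, (1 / 2 - p k) ^ 2 ≤ a k := fun k =>
    le_half_sub_sqrt_quarter_sub (by nlinarith [(hp k).1, (hp k).2])
  have ha_le : ∀ k, a k ≤ 2 * (1 / 2 - p k) ^ 2 := fun k =>
    half_sub_sqrt_quarter_sub_le (sq_nonneg _)
  have ha₀ : ∀ k, 0 ≤ a k := fun k => (sq_nonneg _).trans (ha_ge k)
  have ha_half : ∀ k, a k ≤ 1 / 2 := fun k => sub_le_self _ (sqrt_nonneg _)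
  have hf₀ : ∀ k, 0 < f k := fun k =>
    (by positivity : 0 ≤ f k).lt_of_ne' (sq_pos_iff.1 (by linarith [hsq k, ha_half k]))
  have hf₁ : ∀ k, f k ≤ 1 := fun k =>
    (sq_le_one_iff₀ (hf₀ k).le).1 (by linarith [hsq k, ha₀ k])
  have hlog : ∀ k, 2 * -log (f k) = -log (1 - a k) := fun k => by
    rw [← hsq k, log_pow]; push_cast; ring
  rw [iInf_prod_range_pos_iff_summable_neg_log hf₀ hf₁, ← summable_mul_left_iff two_ne_zero]
  simp only [hlog]
  rw [summable_iff_of_le_of_le_mul ha₀ (fun k => le_neg_log_one_sub (by linarith [ha_half k]))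
    (fun k => neg_log_one_sub_le_two_mul (ha₀ k) (ha_half k))]
  exact summable_iff_of_le_of_le_mul (fun k => sq_nonneg _) ha_ge ha_le
end
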